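/- For a connected graph Γ, the restriction of the edge functionals to the cut space G_Γ = Im ∂*, excluding the loops (which restrict to zero), forms a unimodular system whose complexity equals the number of spanning trees of Γ. -/

import Mathlib

/-- The coboundary map `∂* : C₀(Γ,ℝ) → C₁(Γ,ℝ)` of an oriented graph. -/
noncomputable def cobdry {V E : Type*} (tail head : E → V) :
    (V → ℝ) →ₗ[ℝ] (E → ℝ) :=
  LinearMap.pi fun e => (LinearMap.proj (head e) : (V → ℝ) →ₗ[ℝ] ℝ) - LinearMap.proj (tail e)

/-- Connectivity using only edges from the set `T`. -/
def GraphConnVia {V E : Type*} (tail head : E → V) (T : Set E) : Prop :=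
  ∀ v w : V, Relation.ReflTransGen
    (fun a b => ∃ e ∈ T, (tail e = a ∧ head e = b) ∨ (tail e = b ∧ head e = a)) v w

/-- A loop is an edge with equal endpoints. -/
def IsLoop {V E : Type*} (tail head : E → V) (e : E) : Prop := tail e = head e

/-- `S` is a maximal linearly independent subset of the family of forms `ξ`. -/
def MaxLinIndep {ι : Type*} {U : Type*} [AddCommGroup U] [Module ℝ U]
    (ξ : ι → Module.Dual ℝ U) (S : Set ι) : Prop :=
  LinearIndependent ℝ (fun i : S => ξ i) ∧
    ∀ T : Set ι, S ⊆ T → LinearIndependent ℝ (fun i : T => ξ i) → T = S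

/-!
Pulling back along the surjection `∂* : ℝ^V → G_Γ` embeds `G_Γ^*` injectively into `(ℝ^V)^*`
and sends the functional of the edge `e` to `x_{head e} - x_{tail e}`. These differences
telescope along paths, so the functionals of a connecting edge set `T` generate those of all
edges, over `ℤ` as well as over `ℝ`. Conversely, if `T` does not connect `Γ`, then the coboundary
of the indicator of a `T`-component is a nonzero cut on which all functionals of `T` vanish.
So the maximal independent sets of functionals are the independent connecting ones, and they all
generate the same lattice. As `ker ∂*` consists of the constants, `dim G_Γ = |V| - 1`, and a
counting argument identifies them with the spanning trees, which can contain no loop.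
-/

open Module Submodule

theorem maxLinIndep_iff {ι U : Type*} [AddCommGroup U] [Module ℝ U] {ξ : ι → Dual ℝ U}
    {S : Set ι} :
    MaxLinIndep ξ S ↔ LinearIndepOn ℝ ξ S ∧ span ℝ (ξ '' S) = span ℝ (Set.range ξ) := by
  constructor
  · intro h
    refine ⟨h.1, le_antisymm (span_mono (Set.image_subset_range _ _)) (span_le.2 ?_)⟩
    rintro _ ⟨i, rfl⟩
    exact (LinearIndepOn.mem_span_iff h.1).2 fun hi =>
      h.2 _ (Set.subset_insert i S) hi ▸ Set.mem_insert i S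
  · rintro ⟨hS, hspan⟩
    refine ⟨hS, fun T hST (hT : LinearIndepOn ℝ ξ T) => ?_⟩
    refine Set.Subset.antisymm (fun i hi => ?_) hST
    have hmem : ξ i ∈ span ℝ (ξ '' S) := hspan ▸ subset_span (Set.mem_range_self i)
    exact hS.mem_span_iff.1 hmem (hT.mono (Set.insert_subset hi hST))

section OrientedGraph

variable {V E : Type*} (tail head : E → V)

def EdgeAdj (T : Set E) (a b : V) : Prop :=
  ∃ e ∈ T, (tail e = a ∧ head e = b) ∨ (tail e = b ∧ head e = a)

theorem sub_mem_span_of_reflTransGen {A : Type*} [AddCommGroup A] (x : V → A) {T : Set E}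
    {v w : V} (h : Relation.ReflTransGen (EdgeAdj tail head T) v w) :
    x w - x v ∈ span ℤ ((fun e => x (head e) - x (tail e)) '' T) := by
  induction h with
  | refl => simp
  | tail _ hstep ih =>
    rw [← sub_add_sub_cancel]
    refine add_mem ?_ ih
    obtain ⟨e, he, ⟨rfl, rfl⟩ | ⟨rfl, rfl⟩⟩ := hstep
    · exact subset_span ⟨e, he, rfl⟩
    · rw [← neg_sub]
      exact neg_mem (subset_span ⟨e, he, rfl⟩)

noncomputable def edgeForm (e : E) : Dual ℝ (LinearMap.range (cobdry tail head)) :=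
  (LinearMap.proj e).comp (LinearMap.range (cobdry tail head)).subtype

noncomputable abbrev nonLoopEdgeForm :
    {e // ¬ IsLoop tail head e} → Dual ℝ (LinearMap.range (cobdry tail head)) :=
  edgeForm tail head ∘ Subtype.val

theorem edgeForm_rangeRestrict (e : E) (f : V → ℝ) :
    edgeForm tail head e ((cobdry tail head).rangeRestrict f) = f (head e) - f (tail e) :=
  rfl

variable {tail head}

theorem GraphConnVia.inter_not_isLoop {T : Set E} (hT : GraphConnVia tail head T) :
    GraphConnVia tail head ({e | ¬ IsLoop tail head e} ∩ T) := by
  intro v w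
  refine Relation.ReflTransGen.lift' id (fun a b hab => ?_) v w (hT v w)
  obtain ⟨e, he, hab⟩ := hab
  by_cases hloop : IsLoop tail head e
  · obtain ⟨rfl, rfl⟩ | ⟨rfl, rfl⟩ := hab <;> rw [hloop]
  · exact .single ⟨e, ⟨hloop, he⟩, hab⟩

theorem eq_of_cobdry_eq_zero (hconn : GraphConnVia tail head Set.univ) {f : V → ℝ}
    (hf : cobdry tail head f = 0) (v w : V) : f v = f w := by
  have hzero : span ℤ ((fun e => f (head e) - f (tail e)) '' Set.univ) = ⊥ :=
    span_eq_bot.2 fun _ ⟨e, _, he⟩ => he ▸ congrFun hf e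
  have h := sub_mem_span_of_reflTransGen tail head f (hconn w v)
  rwa [hzero, mem_bot, sub_eq_zero] at h

theorem finrank_range_cobdry [Finite V] (hconn : GraphConnVia tail head Set.univ) :
    finrank ℝ (LinearMap.range (cobdry tail head)) = Nat.card V - 1 := by
  have := Fintype.ofFinite V
  rw [Nat.card_eq_fintype_card]
  rcases isEmpty_or_nonempty V with hV | ⟨⟨v₀⟩⟩
  · have := (cobdry tail head).finrank_range_le
    rw [finrank_pi] at this
    rw [Fintype.card_eq_zero] at this ⊢
    omega
  have hker : LinearMap.ker (cobdry tail head) = ℝ ∙ (1 : V → ℝ) := by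
    ext f
    rw [LinearMap.mem_ker, mem_span_singleton]
    constructor
    · intro hf
      exact ⟨f v₀, funext fun v => by simp [eq_of_cobdry_eq_zero hconn hf v₀ v]⟩
    · rintro ⟨a, rfl⟩
      ext e
      simp [cobdry]
  have := LinearMap.finrank_range_add_finrank_ker (cobdry tail head)
  rw [hker, finrank_span_singleton (Function.ne_iff.2 ⟨v₀, one_ne_zero⟩), finrank_pi] at this
  omega

theorem edgeForm_ne_zero {e : E} (he : ¬ IsLoop tail head e) : edgeForm tail head e ≠ 0 := by
  classical
  intro h
  have := LinearMap.congr_fun h ((cobdry tail head).rangeRestrict (Pi.single (head e) 1))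
  rw [edgeForm_rangeRestrict, Pi.single_eq_same, Pi.single_eq_of_ne he] at this
  simp at this

theorem span_range_nonLoopEdgeForm [Finite E] :
    span ℝ (Set.range (nonLoopEdgeForm tail head)) = ⊤ := by
  refine eq_top_iff.2 fun φ _ => mem_span_of_iInf_ker_le_ker fun g hg => ?_
  suffices g = 0 by simp [this]
  obtain ⟨g, f, rfl⟩ := g
  ext e
  by_cases he : IsLoop tail head e
  · exact sub_eq_zero.2 (congrArg f he.symm)
  · exact (mem_iInf _).1 hg ⟨e, he⟩

theorem edgeForm_mem_zspan_of_connected {T : Set E} (hT : GraphConnVia tail head T) (e : E) :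
    edgeForm tail head e ∈ span ℤ (edgeForm tail head '' T) := by
  set ψ := (cobdry tail head).rangeRestrict.dualMap.restrictScalars ℤ
  have hψ : Function.Injective ψ :=
    LinearMap.dualMap_injective_of_surjective (cobdry tail head).surjective_rangeRestrict
  have hmem : ψ (edgeForm tail head e) ∈ (span ℤ (edgeForm tail head '' T)).map ψ := by
    rw [map_span, Set.image_image]
    exact sub_mem_span_of_reflTransGen tail head (fun v => (LinearMap.proj v : Dual ℝ (V → ℝ)))
      (hT (tail e) (head e))
  obtain ⟨φ, hφ, hφe⟩ := mem_map.1 hmem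
  exact hψ hφe ▸ hφ

theorem zspan_edgeForm_eq_of_connected {T : Set E} (hT : GraphConnVia tail head T) :
    span ℤ (edgeForm tail head '' T) = span ℤ (Set.range (edgeForm tail head)) :=
  le_antisymm (span_mono (Set.image_subset_range _ _))
    (span_le.2 (Set.range_subset_iff.2 (edgeForm_mem_zspan_of_connected hT)))

theorem span_edgeForm_eq_top_of_connected [Finite E] {T : Set E}
    (hT : GraphConnVia tail head T) : span ℝ (edgeForm tail head '' T) = ⊤ := by
  rw [eq_top_iff, ← span_range_nonLoopEdgeForm, span_le]
  rintro _ ⟨e, rfl⟩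
  exact span_subset_span ℤ ℝ _ (edgeForm_mem_zspan_of_connected hT e.1)

theorem connected_of_span_edgeForm_eq_top (hconn : GraphConnVia tail head Set.univ) {T : Set E}
    (hT : span ℝ (edgeForm tail head '' T) = ⊤) : GraphConnVia tail head T := by
  classical
  intro v w
  by_contra hvw
  set C := {u | Relation.ReflTransGen (EdgeAdj tail head T) v u}
  set g := (cobdry tail head).rangeRestrict (C.indicator 1)
  have hg : g = 0 := by
    refine (forall_dual_apply_eq_zero_iff ℝ g).1 fun φ => ?_
    have hle : span ℝ (edgeForm tail head '' T) ≤ LinearMap.ker (Dual.eval ℝ _ g) := by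
      rw [span_le]
      rintro _ ⟨e, he, rfl⟩
      have hC : tail e ∈ C ↔ head e ∈ C :=
        ⟨fun h => h.tail ⟨e, he, .inl ⟨rfl, rfl⟩⟩, fun h => h.tail ⟨e, he, .inr ⟨rfl, rfl⟩⟩⟩
      rw [SetLike.mem_coe, LinearMap.mem_ker, Dual.eval_apply, edgeForm_rangeRestrict,
        sub_eq_zero]
      by_cases hhead : head e ∈ C
      · rw [Set.indicator_of_mem hhead, Set.indicator_of_mem (hC.2 hhead), Pi.one_apply,
          Pi.one_apply]
      · rw [Set.indicator_of_notMem hhead, Set.indicator_of_notMem (mt hC.1 hhead)]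
    exact hle (hT ▸ mem_top : φ ∈ _)
  have := eq_of_cobdry_eq_zero hconn (congrArg Subtype.val hg) v w
  rw [Set.indicator_of_mem (show v ∈ C from .refl),
    Set.indicator_of_notMem (show w ∉ C from hvw)] at this
  exact one_ne_zero this

variable [Finite E] {S : Set {e // ¬ IsLoop tail head e}}

theorem maxLinIndep_nonLoopEdgeForm_iff (hconn : GraphConnVia tail head Set.univ) :
    MaxLinIndep (nonLoopEdgeForm tail head) S ↔
      LinearIndepOn ℝ (nonLoopEdgeForm tail head) S ∧
        GraphConnVia tail head (Subtype.val '' S) := by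
  rw [maxLinIndep_iff, span_range_nonLoopEdgeForm, Set.image_comp]
  exact and_congr_right fun _ =>
    ⟨connected_of_span_edgeForm_eq_top hconn, span_edgeForm_eq_top_of_connected⟩

theorem ncard_eq_of_maxLinIndep [Finite V] (hconn : GraphConnVia tail head Set.univ)
    (hS : MaxLinIndep (nonLoopEdgeForm tail head) S) : S.ncard = Nat.card V - 1 := by
  obtain ⟨hli, hspan⟩ := maxLinIndep_iff.1 hS
  have := Fintype.ofFinite S
  have hrank := finrank_span_eq_card hli
  rw [← Set.image_eq_range, hspan, span_range_nonLoopEdgeForm, finrank_top,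
    Subspace.dual_finrank_eq, finrank_range_cobdry hconn] at hrank
  rw [hrank, ← Nat.card_eq_fintype_card, Nat.card_coe_set_eq]

theorem maxLinIndep_preimage_of_spanningTree [Finite V]
    (hconn : GraphConnVia tail head Set.univ) {T : Set E} (hcard : T.ncard = Nat.card V - 1)
    (hT : GraphConnVia tail head T) :
    MaxLinIndep (nonLoopEdgeForm tail head) (Subtype.val ⁻¹' T) ∧
      Subtype.val '' (Subtype.val ⁻¹' T : Set {e // ¬ IsLoop tail head e}) = T := by
  set S : Set {e // ¬ IsLoop tail head e} := Subtype.val ⁻¹' T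
  have hST : Subtype.val '' S = {e | ¬ IsLoop tail head e} ∩ T := by
    rw [Set.image_preimage_eq_range_inter, Subtype.range_coe_subtype]
  have hspan : span ℝ ((nonLoopEdgeForm tail head) '' S) = ⊤ := by
    rw [Set.image_comp, hST]
    exact span_edgeForm_eq_top_of_connected hT.inter_not_isLoop
  have := Fintype.ofFinite S
  have hcardS : Fintype.card S ≤ finrank ℝ (Dual ℝ (LinearMap.range (cobdry tail head))) := by
    rw [Subspace.dual_finrank_eq, finrank_range_cobdry hconn, ← hcard, ← Nat.card_eq_fintype_card,
      Nat.card_coe_set_eq, ← Set.ncard_image_of_injective S Subtype.val_injective, hST]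
    exact Set.ncard_le_ncard Set.inter_subset_right
  have hmax : MaxLinIndep (nonLoopEdgeForm tail head) S := by
    refine maxLinIndep_iff.2 ⟨?_, by rw [hspan, span_range_nonLoopEdgeForm]⟩
    exact linearIndependent_of_top_le_span_of_card_le_finrank
      (by rw [← Set.image_eq_range, hspan]) hcardS
  refine ⟨hmax, Set.eq_of_subset_of_ncard_le (Set.image_preimage_subset _ _) ?_⟩
  rw [Set.ncard_image_of_injective S Subtype.val_injective, ncard_eq_of_maxLinIndep hconn hmax,
    hcard]

theorem ncard_maxLinIndep_nonLoopEdgeForm [Finite V] (hconn : GraphConnVia tail head Set.univ) :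
    {S | MaxLinIndep (nonLoopEdgeForm tail head) S}.ncard =
      {T : Set E | T.ncard = Nat.card V - 1 ∧ GraphConnVia tail head T}.ncard := by
  have hbij : {T : Set E | T.ncard = Nat.card V - 1 ∧ GraphConnVia tail head T} =
      Set.image Subtype.val '' {S | MaxLinIndep (nonLoopEdgeForm tail head) S} := by
    ext T
    constructor
    · rintro ⟨hcard, hT⟩
      exact ⟨_, maxLinIndep_preimage_of_spanningTree hconn hcard hT⟩
    · rintro ⟨S, hS, rfl⟩
      refine ⟨?_, ((maxLinIndep_nonLoopEdgeForm_iff hconn).1 hS).2⟩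
      rw [Set.ncard_image_of_injective S Subtype.val_injective, ncard_eq_of_maxLinIndep hconn hS]
  rw [hbij, Set.ncard_image_of_injective _ (Set.image_injective.2 Subtype.val_injective)]

end OrientedGraph

theorem stmt8_general {V E : Type*} [Fintype V] [Fintype E]
    (tail head : E → V) (hconn : GraphConnVia tail head Set.univ) :
    (∀ e : {e : E // ¬ IsLoop tail head e},
      ((LinearMap.proj e.1).comp (LinearMap.range (cobdry tail head)).subtype :
        Module.Dual ℝ (LinearMap.range (cobdry tail head))) ≠ 0) ∧
    Submodule.span ℝ (Set.range fun e : {e : E // ¬ IsLoop tail head e} =>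
      ((LinearMap.proj e.1).comp (LinearMap.range (cobdry tail head)).subtype :
        Module.Dual ℝ (LinearMap.range (cobdry tail head)))) = ⊤ ∧
    (∃ M : Submodule ℤ (Module.Dual ℝ (LinearMap.range (cobdry tail head))),
      ∀ S, MaxLinIndep (fun e : {e : E // ¬ IsLoop tail head e} =>
        ((LinearMap.proj e.1).comp (LinearMap.range (cobdry tail head)).subtype)) S →
        Submodule.span ℤ ((fun e : {e : E // ¬ IsLoop tail head e} =>
          ((LinearMap.proj e.1).comp (LinearMap.range (cobdry tail head)).subtype :
            Module.Dual ℝ (LinearMap.range (cobdry tail head)))) '' S) = M) ∧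
    Set.ncard {S | MaxLinIndep (fun e : {e : E // ¬ IsLoop tail head e} =>
        ((LinearMap.proj e.1).comp (LinearMap.range (cobdry tail head)).subtype :
          Module.Dual ℝ (LinearMap.range (cobdry tail head)))) S} =
      Set.ncard {T : Set E | T.ncard = Nat.card V - 1 ∧ GraphConnVia tail head T} := by
  refine ⟨fun e => edgeForm_ne_zero e.2, span_range_nonLoopEdgeForm,
    ⟨span ℤ (Set.range (edgeForm tail head)), fun S hS => ?_⟩,
    ncard_maxLinIndep_nonLoopEdgeForm hconn⟩
  have hS_conn := ((maxLinIndep_nonLoopEdgeForm_iff hconn).1 hS).2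
  rw [← zspan_edgeForm_eq_of_connected hS_conn, ← Set.image_comp]
  rfl

/-- The cographic unimodular system: the edge functionals restricted to the cut space
`G_Γ = Im ∂*`, excluding the loops, form a unimodular system whose complexity is the
number of spanning trees of `Γ`. -/
theorem stmt8 {V E : Type*} [Fintype V] [Fintype E] [DecidableEq V] [DecidableEq E]
    (tail head : E → V) (hconn : GraphConnVia tail head Set.univ) :
    (∀ e : {e : E // ¬ IsLoop tail head e},
      ((LinearMap.proj e.1).comp (LinearMap.range (cobdry tail head)).subtype :
        Module.Dual ℝ (LinearMap.range (cobdry tail head))) ≠ 0) ∧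
    Submodule.span ℝ (Set.range fun e : {e : E // ¬ IsLoop tail head e} =>
      ((LinearMap.proj e.1).comp (LinearMap.range (cobdry tail head)).subtype :
        Module.Dual ℝ (LinearMap.range (cobdry tail head)))) = ⊤ ∧
    (∃ M : Submodule ℤ (Module.Dual ℝ (LinearMap.range (cobdry tail head))),
      ∀ S, MaxLinIndep (fun e : {e : E // ¬ IsLoop tail head e} =>
        ((LinearMap.proj e.1).comp (LinearMap.range (cobdry tail head)).subtype)) S →
        Submodule.span ℤ ((fun e : {e : E // ¬ IsLoop tail head e} =>
          ((LinearMap.proj e.1).comp (LinearMap.range (cobdry tail head)).subtype :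
            Module.Dual ℝ (LinearMap.range (cobdry tail head)))) '' S) = M) ∧
    Set.ncard {S | MaxLinIndep (fun e : {e : E // ¬ IsLoop tail head e} =>
        ((LinearMap.proj e.1).comp (LinearMap.range (cobdry tail head)).subtype :
          Module.Dual ℝ (LinearMap.range (cobdry tail head)))) S} =
      Set.ncard {T : Set E | T.ncard = Nat.card V - 1 ∧ GraphConnVia tail head T} :=
  stmt8_general tail head hconn
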